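/- arXiv:math/0602238 — 4 statements merged into one kernel-verified Lean document; each statement's English description precedes it below -/
import Mathlib

section
/- Let g(x) = Σ_{j=1}^K π_j φ(x; μ_j, Σ_j) be a mixture of K multivariate normal densities on ℝ^D with positive definite covariance matrices Σ_j, mixing proportions π_j ∈ (0,1) summing to 1. If x* is a critical point of g (i.e., ∇g(x*) = 0), then there exist α_1,...,α_K ≥ 0 with Σα_i = 1 such that x* = [Σ_i α_i Σ_i^{-1}]^{-1} [Σ_i α_i Σ_i^{-1} μ_i]. In other words, all critical points of g lie on the ridgeline manifold. -/
/-!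
At a critical point `x` of the mixture, the gradient
`-∑ i, wᵢ φᵢ(x) Σᵢ⁻¹ (x - μᵢ)` vanishes. The weights `βᵢ = wᵢ φᵢ(x)` are positive, so
normalising them to `αᵢ = βᵢ / ∑ⱼ βⱼ` gives `(∑ αᵢ Σᵢ⁻¹) x = ∑ αᵢ Σᵢ⁻¹ μᵢ`, and
`∑ αᵢ Σᵢ⁻¹` is positive definite, hence invertible.
-/

open Matrix

/-- Multivariate normal density on `ℝ^D` with mean `μ` and covariance `S`. -/
noncomputable def gauss (D : ℕ) (μ : Fin D → ℝ) (S : Matrix (Fin D) (Fin D) ℝ)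
    (x : Fin D → ℝ) : ℝ :=
  (Real.sqrt ((2 * Real.pi) ^ D * S.det))⁻¹ *
    Real.exp (-((x - μ) ⬝ᵥ (S⁻¹ *ᵥ (x - μ))) / 2)

namespace Matrix

variable {n : Type*} [Fintype n]

noncomputable def dotProductCLM : (n → ℝ) →L[ℝ] (n → ℝ) →L[ℝ] ℝ :=
  (dotProductBilin ℝ ℝ).toContinuousBilinearMap

@[simp]
lemma dotProductCLM_apply (u v : n → ℝ) : dotProductCLM u v = u ⬝ᵥ v := rfl

lemma dotProductCLM_injective : Function.Injective (dotProductCLM : (n → ℝ) → _) :=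
  fun u v h => dotProduct_eq u v fun w => congr($h w)

lemma hasFDerivAt_quadForm {A : Matrix n n ℝ} (hA : A.IsSymm) (μ x : n → ℝ) :
    HasFDerivAt (fun y => (y - μ) ⬝ᵥ (A *ᵥ (y - μ)))
      ((2 : ℝ) • dotProductCLM (A *ᵥ (x - μ))) x := by
  have hshift : HasFDerivAt (fun y : n → ℝ => y - μ) (ContinuousLinearMap.id ℝ _) x :=
    (hasFDerivAt_id x).sub_const μ
  have hmulVec := (mulVecLin A).toContinuousLinearMap.hasFDerivAt.comp x hshift
  refine (dotProductCLM.hasFDerivAt_of_bilinear hshift hmulVec).congr_fderiv ?_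
  ext v
  have hsymm : (x - μ) ᵥ* A = A *ᵥ (x - μ) := by
    simpa only [hA.eq] using vecMul_transpose A (x - μ)
  simp only [_root_.add_apply, ContinuousLinearMap.precompR_apply,
    ContinuousLinearMap.precompL_apply, ContinuousLinearMap.comp_apply,
    ContinuousLinearMap.compL_apply, ContinuousLinearMap.id_apply, _root_.smul_apply,
    LinearMap.coe_toContinuousLinearMap', Function.comp_apply, mulVecLin_apply,
    dotProductCLM_apply]
  rw [dotProduct_mulVec, hsymm, dotProduct_comm v, two_smul]

lemma eq_inv_mulVec_of_sum_smul_mulVec_sub_eq_zero {ι R : Type*} [Fintype ι] [DecidableEq n]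
    [CommRing R] {α : ι → R} {P : ι → Matrix n n R} {m : ι → n → R} {x : n → R}
    (hdet : IsUnit (∑ i, α i • P i).det) (h : ∑ i, α i • (P i *ᵥ (x - m i)) = 0) :
    x = (∑ i, α i • P i)⁻¹ *ᵥ ∑ i, α i • (P i *ᵥ m i) := by
  have hx : (∑ i, α i • P i) *ᵥ x = ∑ i, α i • (P i *ᵥ m i) := by
    simpa only [sum_mulVec, smul_mulVec, mulVec_sub, smul_sub, Finset.sum_sub_distrib,
      sub_eq_zero] using h
  rw [← hx, mulVec_mulVec, nonsing_inv_mul _ hdet, one_mulVec]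

end Matrix

section Ridgeline

variable {ι n : Type*} [Fintype ι] [Fintype n] [DecidableEq n]

noncomputable def ridgelinePoint (μ : ι → n → ℝ) (S : ι → Matrix n n ℝ) (α : ι → ℝ) :
    n → ℝ :=
  (∑ i, α i • (S i)⁻¹)⁻¹ *ᵥ ∑ i, α i • ((S i)⁻¹ *ᵥ μ i)

def ridgeline (μ : ι → n → ℝ) (S : ι → Matrix n n ℝ) : Set (n → ℝ) :=
  ridgelinePoint μ S '' stdSimplex ℝ ι

lemma mem_ridgeline_of_sum_smul_inv_mulVec_sub_eq_zero [Nonempty ι] {μ : ι → n → ℝ}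
    {S : ι → Matrix n n ℝ} (hS : ∀ i, (S i).PosDef) {β : ι → ℝ} (hβ : ∀ i, 0 < β i)
    {x : n → ℝ} (h : ∑ i, β i • ((S i)⁻¹ *ᵥ (x - μ i)) = 0) : x ∈ ridgeline μ S := by
  have hsum : 0 < ∑ i, β i := Finset.sum_pos (fun i _ => hβ i) Finset.univ_nonempty
  set α : ι → ℝ := fun i => (∑ j, β j)⁻¹ * β i
  have hα : ∀ i, 0 < α i := fun i => mul_pos (inv_pos.mpr hsum) (hβ i)
  refine ⟨α, ⟨fun i => (hα i).le, by rw [← Finset.mul_sum, inv_mul_cancel₀ hsum.ne']⟩, ?_⟩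
  have hdet : IsUnit (∑ i, α i • (S i)⁻¹).det :=
    (posDef_sum Finset.univ_nonempty fun i _ => (hS i).inv.smul (hα i)).det_pos.ne'.isUnit
  refine (eq_inv_mulVec_of_sum_smul_mulVec_sub_eq_zero hdet ?_).symm
  simp only [α, mul_smul, ← Finset.smul_sum, h, smul_zero]

end Ridgeline

lemma gauss_pos {D : ℕ} (μ : Fin D → ℝ) {S : Matrix (Fin D) (Fin D) ℝ} (hS : S.PosDef)
    (x : Fin D → ℝ) : 0 < gauss D μ S x :=
  mul_pos (inv_pos.mpr (Real.sqrt_pos.mpr (mul_pos (by positivity) hS.det_pos)))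
    (Real.exp_pos _)

lemma hasFDerivAt_gauss {D : ℕ} (μ : Fin D → ℝ) {S : Matrix (Fin D) (Fin D) ℝ}
    (hS : S.IsSymm) (x : Fin D → ℝ) :
    HasFDerivAt (gauss D μ S) (-gauss D μ S x • dotProductCLM (S⁻¹ *ᵥ (x - μ))) x := by
  have hgauss : gauss D μ S = fun y =>
      (Real.sqrt ((2 * Real.pi) ^ D * S.det))⁻¹ *
        Real.exp (-((y - μ) ⬝ᵥ (S⁻¹ *ᵥ (y - μ))) * 2⁻¹) := by
    funext y
    rw [gauss, div_eq_mul_inv]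
  rw [hgauss]
  refine ((((hasFDerivAt_quadForm hS.inv μ x).fun_neg.mul_const 2⁻¹).exp).const_mul
    (Real.sqrt ((2 * Real.pi) ^ D * S.det))⁻¹).congr_fderiv ?_
  module

section GaussMixture

variable {ι : Type*} [Fintype ι] {D : ℕ} (w : ι → ℝ) (μ : ι → Fin D → ℝ)
  {S : ι → Matrix (Fin D) (Fin D) ℝ} (x : Fin D → ℝ)

lemma hasFDerivAt_gaussMixture (hS : ∀ i, (S i).IsSymm) :
    HasFDerivAt (fun y => ∑ i, w i * gauss D (μ i) (S i) y)
      (-dotProductCLM (∑ i, (w i * gauss D (μ i) (S i) x) • ((S i)⁻¹ *ᵥ (x - μ i)))) x := by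
  refine (HasFDerivAt.fun_sum fun i _ =>
    (hasFDerivAt_gauss (μ i) (hS i) x).const_mul (w i)).congr_fderiv ?_
  simp only [map_sum, map_smul, ← Finset.sum_neg_distrib, smul_smul, mul_neg, neg_smul]

lemma fderiv_gaussMixture_eq_zero_iff (hS : ∀ i, (S i).IsSymm) :
    fderiv ℝ (fun y => ∑ i, w i * gauss D (μ i) (S i) y) x = 0 ↔
      ∑ i, (w i * gauss D (μ i) (S i) x) • ((S i)⁻¹ *ᵥ (x - μ i)) = 0 := by
  rw [(hasFDerivAt_gaussMixture w μ x hS).fderiv, neg_eq_zero,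
    map_eq_zero_iff _ dotProductCLM_injective]

end GaussMixture

/-- All critical points of a normal mixture lie on the ridgeline manifold. -/
theorem ridgeline_contains_critical_points
    (D K : ℕ) (w : Fin K → ℝ) (hw : ∀ i, w i ∈ Set.Ioo (0 : ℝ) 1)
    (hwsum : ∑ i, w i = 1)
    (μ : Fin K → (Fin D → ℝ)) (S : Fin K → Matrix (Fin D) (Fin D) ℝ)
    (hS : ∀ i, (S i).PosDef)
    (xstar : Fin D → ℝ)
    (hcrit : fderiv ℝ (fun x => ∑ i, w i * gauss D (μ i) (S i) x) xstar = 0) :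
    ∃ α : Fin K → ℝ, (∀ i, 0 ≤ α i) ∧ (∑ i, α i = 1) ∧
      xstar = (∑ i, α i • (S i)⁻¹)⁻¹ *ᵥ (∑ i, α i • ((S i)⁻¹ *ᵥ μ i)) := by
  have : Nonempty (Fin K) :=
    Finset.univ_nonempty_iff.mp (Finset.nonempty_of_sum_ne_zero (hwsum ▸ one_ne_zero))
  have hstationary := (fderiv_gaussMixture_eq_zero_iff w μ xstar
    fun i => isHermitian_iff_isSymm.mp (hS i).isHermitian).mp hcrit
  obtain ⟨α, ⟨hα_nonneg, hα_sum⟩, hx⟩ := mem_ridgeline_of_sum_smul_inv_mulVec_sub_eq_zero hS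
    (fun i => mul_pos (hw i).1 (gauss_pos (μ i) (hS i) xstar)) hstationary
  exact ⟨α, hα_nonneg, hα_sum, hx.symm⟩
end

section
/- Let x(α) be the ridgeline for a K-component normal mixture, S_α = Σ_j α_j Σ_j^{-1}, v_j = Σ_j^{-1}(x(α) - μ_j), and d_j = S_α^{-1}(v_j - v_K) for j = 1,...,K-1 the tangent directions. If w satisfies w' S_α d_j = 0 for all j = 1,...,K-1, then w' v_j = 0 for all j = 1,...,K. -/
/-!
The first-order condition defining the ridgeline point says exactly that the weighted sum
`∑ αⱼ vⱼ` vanishes. Since `S_α` is positive definite, hence invertible, `w ⬝ S_α dⱼ = 0`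
means `w ⬝ vⱼ = w ⬝ v_K` for every `j`, so all the `w ⬝ vⱼ` share one value `a`; pairing `w` with
the vanishing weighted sum gives `(∑ αⱼ) a = 0`, and `∑ αⱼ = 1` forces `a = 0`.
-/

open Matrix

namespace Matrix

variable {ι n R : Type*} [Fintype ι] [Fintype n] [CommRing R]

theorem sum_smul_mulVec_sub_eq_zero {c : ι → R} {B : ι → Matrix n n R} {μ : ι → n → R}
    {x : n → R} (hx : (∑ j, c j • B j) *ᵥ x = ∑ j, c j • (B j *ᵥ μ j)) :
    ∑ j, c j • (B j *ᵥ (x - μ j)) = 0 := by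
  simp only [mulVec_sub, smul_sub, Finset.sum_sub_distrib, ← smul_mulVec, ← sum_mulVec, hx,
    sub_self]

theorem eq_zero_of_sum_smul_eq_zero_of_dotProduct_eq {c : ι → R} {v : ι → n → R}
    (hv : ∑ j, c j • v j = 0) (hc : ∑ j, c j = 1) {w : n → R} {a : R}
    (hw : ∀ j, w ⬝ᵥ v j = a) : a = 0 :=
  calc a = (∑ j, c j) * a := by rw [hc, one_mul]
    _ = w ⬝ᵥ ∑ j, c j • v j := by
      rw [Finset.sum_mul]
      simp only [dotProduct_sum, dotProduct_smul, hw, smul_eq_mul]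
    _ = 0 := by rw [hv, dotProduct_zero]

end Matrix

/-- If `w` is orthogonal (via `S_α`) to all the tangent directions `d_j` of the
ridgeline surface, then `w` is orthogonal to every vector `v_j`. -/
theorem orthogonal_to_tangents_implies_orthogonal_to_vs
    (D K : ℕ)
    (μ : Fin (K + 1) → (Fin D → ℝ)) (Sg : Fin (K + 1) → Matrix (Fin D) (Fin D) ℝ)
    (hSg : ∀ j, (Sg j).PosDef)
    (α : Fin (K + 1) → ℝ) (hα : ∀ j, 0 < α j) (hαsum : ∑ j, α j = 1)
    (Sα : Matrix (Fin D) (Fin D) ℝ) (hSα : Sα = ∑ j, α j • (Sg j)⁻¹)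
    (x : Fin D → ℝ) (hx : x = Sα⁻¹ *ᵥ (∑ j, α j • ((Sg j)⁻¹ *ᵥ μ j)))
    (v : Fin (K + 1) → (Fin D → ℝ)) (hv : ∀ j, v j = (Sg j)⁻¹ *ᵥ (x - μ j))
    (d : Fin K → (Fin D → ℝ))
    (hd : ∀ j : Fin K, d j = Sα⁻¹ *ᵥ (v j.castSucc - v (Fin.last K)))
    (w : Fin D → ℝ) (hw : ∀ j : Fin K, w ⬝ᵥ (Sα *ᵥ d j) = 0) :
    ∀ j : Fin (K + 1), w ⬝ᵥ v j = 0 := by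
  have hSα_pos : Sα.PosDef :=
    hSα ▸ posDef_sum Finset.univ_nonempty fun j _ ↦ (hSg j).inv.smul (hα j)
  have hSα_inv : Sα * Sα⁻¹ = 1 := mul_nonsing_inv Sα ((isUnit_iff_isUnit_det _).1 hSα_pos.isUnit)
  have htangent (j : Fin K) : w ⬝ᵥ v j.castSucc = w ⬝ᵥ v (Fin.last K) := by
    simpa [hd, mulVec_mulVec, hSα_inv, dotProduct_sub, sub_eq_zero] using hw j
  have hconst : ∀ j, w ⬝ᵥ v j = w ⬝ᵥ v (Fin.last K) := Fin.forall_fin_succ'.2 ⟨htangent, rfl⟩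
  have hbalance : ∑ j, α j • v j = 0 := by
    simp only [hv]
    exact sum_smul_mulVec_sub_eq_zero (by rw [← hSα, hx, mulVec_mulVec, hSα_inv, one_mulVec])
  intro j
  rw [hconst j, eq_zero_of_sum_smul_eq_zero_of_dotProduct_eq hbalance hαsum hconst]
end

section
/- Let φ_1(α), φ_2(α) denote the two normal component densities evaluated along the ridgeline x*(α), and define Π(α) = φ_2'(α)/(φ_2'(α) - φ_1'(α)) (derivative in α). Then 1/Π(α) = 1 + (α φ_1(α))/((1-α) φ_2(α)) for α ∈ (0,1). -/
/-!
At `x = x*(α)` the gradient of `(1 - α) log φ₁ + α log φ₂` vanishes: `(1 - α) v₁ + α v₂ = 0`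
with `vⱼ = Σⱼ⁻¹ (x - μⱼ)`. Differentiating `K(α) x*(α) = (1 - α) Σ₁⁻¹ μ₁ + α Σ₂⁻¹ μ₂`, where
`K(α) = (1 - α) Σ₁⁻¹ + α Σ₂⁻¹`, gives `K ẋ = v₁ - v₂ = v₁ / α`, so `s = ẋ ⬝ v₁ = v₁ᵀ K⁻¹ v₁ / α`
is positive (`v₁ ≠ 0` as `μ₁ ≠ μ₂`). By the chain rule `φ₁' = -s φ₁` and
`φ₂' = -(ẋ ⬝ v₂) φ₂ = ((1 - α) / α) s φ₂`, and the formula for `1 / Π` is algebra.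
-/

open Matrix

noncomputable def ridge (D : ℕ) (μ₁ μ₂ : Fin D → ℝ)
    (S₁ S₂ : Matrix (Fin D) (Fin D) ℝ) (α : ℝ) : Fin D → ℝ :=
  ((1 - α) • S₁⁻¹ + α • S₂⁻¹)⁻¹ *ᵥ ((1 - α) • (S₁⁻¹ *ᵥ μ₁) + α • (S₂⁻¹ *ᵥ μ₂))

/-- Component density \`j\` evaluated along the ridgeline, as a function of \`α\`. -/
noncomputable def φα (D : ℕ) (μ₁ μ₂ : Fin D → ℝ)
    (S₁ S₂ : Matrix (Fin D) (Fin D) ℝ) (ν : Fin D → ℝ) (T : Matrix (Fin D) (Fin D) ℝ)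
    (α : ℝ) : ℝ :=
  gauss D ν T (ridge D μ₁ μ₂ S₁ S₂ α)

open Filter Topology

section Calculus

variable {𝕜 : Type*} [NontriviallyNormedField 𝕜] {n : Type*} [Fintype n] {t : 𝕜}

theorem HasDerivAt.dotProduct {u v : 𝕜 → n → 𝕜} {u' v' : n → 𝕜}
    (hu : HasDerivAt u u' t) (hv : HasDerivAt v v' t) :
    HasDerivAt (fun s => u s ⬝ᵥ v s) (u' ⬝ᵥ v t + u t ⬝ᵥ v') t := by
  unfold _root_.dotProduct
  rw [← Finset.sum_add_distrib]
  exact HasDerivAt.fun_sum fun i _ => (hasDerivAt_pi.1 hu i).mul (hasDerivAt_pi.1 hv i)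

theorem HasDerivAt.mulVec {m : Type*} [Fintype m] {M : 𝕜 → Matrix m n 𝕜} {M' : Matrix m n 𝕜}
    {v : 𝕜 → n → 𝕜} {v' : n → 𝕜} (hM : ∀ i j, HasDerivAt (fun s => M s i j) (M' i j) t)
    (hv : HasDerivAt v v' t) :
    HasDerivAt (fun s => M s *ᵥ v s) (M' *ᵥ v t + M t *ᵥ v') t :=
  hasDerivAt_pi.2 fun i => (hasDerivAt_pi.2 (hM i)).dotProduct hv

theorem HasDerivAt.dotProduct_mulVec_self {Q : Matrix n n 𝕜} (hQ : Q.IsSymm) {v : 𝕜 → n → 𝕜}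
    {v' : n → 𝕜} (hv : HasDerivAt v v' t) :
    HasDerivAt (fun s => v s ⬝ᵥ (Q *ᵥ v s)) (2 * (v' ⬝ᵥ (Q *ᵥ v t))) t := by
  convert hv.dotProduct (hv.mulVec (M' := 0) fun i j => hasDerivAt_const t (Q i j)) using 1
  rw [zero_mulVec, zero_add, dotProduct_mulVec, ← mulVec_transpose, hQ.eq, dotProduct_comm,
    two_mul]

variable [DecidableEq n]

theorem differentiableAt_det {M : 𝕜 → Matrix n n 𝕜}
    (hM : ∀ i j, DifferentiableAt 𝕜 (fun s => M s i j) t) :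
    DifferentiableAt 𝕜 (fun s => (M s).det) t := by
  simp only [det_apply']
  exact DifferentiableAt.fun_sum fun σ _ =>
    (DifferentiableAt.fun_finsetProd fun i _ => hM (σ i) i).const_mul _

theorem differentiableAt_adjugate_apply {M : 𝕜 → Matrix n n 𝕜}
    (hM : ∀ i j, DifferentiableAt 𝕜 (fun s => M s i j) t) (i j : n) :
    DifferentiableAt 𝕜 (fun s => (M s).adjugate i j) t := by
  simp only [adjugate_apply]
  refine differentiableAt_det fun k l => ?_
  by_cases hk : k = j
  · simpa only [hk, updateRow_self] using differentiableAt_const _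
  · simpa only [updateRow_ne hk] using hM k l

theorem differentiableAt_inv_apply {M : 𝕜 → Matrix n n 𝕜}
    (hM : ∀ i j, DifferentiableAt 𝕜 (fun s => M s i j) t) (hdet : (M t).det ≠ 0) (i j : n) :
    DifferentiableAt 𝕜 (fun s => (M s)⁻¹ i j) t := by
  simp only [inv_def, Ring.inverse_eq_inv', Matrix.smul_apply, smul_eq_mul]
  exact ((differentiableAt_det hM).inv hdet).mul (differentiableAt_adjugate_apply hM i j)

theorem HasDerivAt.inv_mulVec {M : 𝕜 → Matrix n n 𝕜} {M' : Matrix n n 𝕜} {b : 𝕜 → n → 𝕜}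
    {b' : n → 𝕜} (hM : ∀ i j, HasDerivAt (fun s => M s i j) (M' i j) t)
    (hb : HasDerivAt b b' t) (hdet : (M t).det ≠ 0) :
    HasDerivAt (fun s => (M s)⁻¹ *ᵥ b s) ((M t)⁻¹ *ᵥ (b' - M' *ᵥ ((M t)⁻¹ *ᵥ b t))) t := by
  set x := fun s => (M s)⁻¹ *ᵥ b s
  have hM_diff i j := (hM i j).differentiableAt
  obtain ⟨x', hx⟩ : ∃ x', HasDerivAt x x' t := by
    refine ⟨_, (differentiableAt_pi.2 fun i => ?_).hasDerivAt⟩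
    exact DifferentiableAt.fun_sum fun j _ =>
      (differentiableAt_inv_apply hM_diff hdet i j).mul (hasDerivAt_pi.1 hb j).differentiableAt
  have hMx : (fun s => M s *ᵥ x s) =ᶠ[𝓝 t] b := by
    filter_upwards [(differentiableAt_det hM_diff).continuousAt.eventually_ne hdet] with s hs
    simp only [x, mulVec_mulVec, mul_nonsing_inv _ (isUnit_iff_ne_zero.2 hs), one_mulVec]
  have key : M' *ᵥ x t + M t *ᵥ x' = b' :=
    (hx.mulVec hM).unique (hb.congr_of_eventuallyEq hMx)
  convert hx using 1
  rw [← key, add_sub_cancel_left, mulVec_mulVec, nonsing_inv_mul _ (isUnit_iff_ne_zero.2 hdet),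
    one_mulVec]

end Calculus

theorem gauss_pos_s10 {D : ℕ} (ν : Fin D → ℝ) {T : Matrix (Fin D) (Fin D) ℝ} (hT : 0 < T.det)
    (x : Fin D → ℝ) : 0 < gauss D ν T x :=
  mul_pos (inv_pos.2 (Real.sqrt_pos.2 (mul_pos (pow_pos (by positivity) D) hT)))
    (Real.exp_pos _)

theorem HasDerivAt.gauss_comp {D : ℕ} (ν : Fin D → ℝ) {T : Matrix (Fin D) (Fin D) ℝ}
    (hT : T.IsSymm) {x : ℝ → Fin D → ℝ} {x' : Fin D → ℝ} {t : ℝ} (hx : HasDerivAt x x' t) :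
    HasDerivAt (fun s => gauss D ν T (x s))
      (-(x' ⬝ᵥ (T⁻¹ *ᵥ (x t - ν))) * gauss D ν T (x t)) t := by
  have hq := (hx.sub_const ν).dotProduct_mulVec_self hT.inv
  refine ((hq.neg.div_const 2).exp.const_mul
    (Real.sqrt ((2 * Real.pi) ^ D * T.det))⁻¹).congr_deriv ?_
  simp only [gauss, Pi.neg_apply]
  ring

section Ridge

variable {D : ℕ} (μ₁ μ₂ : Fin D → ℝ) {S₁ S₂ : Matrix (Fin D) (Fin D) ℝ} {α : ℝ}

noncomputable def ridgeMatrix (S₁ S₂ : Matrix (Fin D) (Fin D) ℝ) (α : ℝ) :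
    Matrix (Fin D) (Fin D) ℝ :=
  (1 - α) • S₁⁻¹ + α • S₂⁻¹

theorem ridge_eq_ridgeMatrix_inv_mulVec :
    ridge D μ₁ μ₂ S₁ S₂ α =
      (ridgeMatrix S₁ S₂ α)⁻¹ *ᵥ ((1 - α) • (S₁⁻¹ *ᵥ μ₁) + α • (S₂⁻¹ *ᵥ μ₂)) :=
  rfl

theorem ridgeMatrix_posDef (hS₁ : S₁.PosDef) (hS₂ : S₂.PosDef) (hα : α ∈ Set.Ioo (0 : ℝ) 1) :
    (ridgeMatrix S₁ S₂ α).PosDef :=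
  (hS₁.inv.smul (sub_pos.2 hα.2)).add (hS₂.inv.smul hα.1)

theorem hasDerivAt_ridgeMatrix_apply (i j : Fin D) :
    HasDerivAt (fun s => ridgeMatrix S₁ S₂ s i j) ((S₂⁻¹ - S₁⁻¹) i j) α := by
  have h : (fun s => ridgeMatrix S₁ S₂ s i j) = fun s => (1 - s) * S₁⁻¹ i j + s * S₂⁻¹ i j := by
    ext s
    simp [ridgeMatrix]
  rw [h]
  refine ((((hasDerivAt_id' α).const_sub 1).mul_const (S₁⁻¹ i j)).add
    ((hasDerivAt_id' α).mul_const (S₂⁻¹ i j))).congr_deriv ?_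
  rw [Matrix.sub_apply]
  ring

theorem ridge_stationary (hK : (ridgeMatrix S₁ S₂ α).det ≠ 0) :
    (1 - α) • (S₁⁻¹ *ᵥ (ridge D μ₁ μ₂ S₁ S₂ α - μ₁)) +
      α • (S₂⁻¹ *ᵥ (ridge D μ₁ μ₂ S₁ S₂ α - μ₂)) = 0 := by
  have h : ridgeMatrix S₁ S₂ α *ᵥ ridge D μ₁ μ₂ S₁ S₂ α =
      (1 - α) • (S₁⁻¹ *ᵥ μ₁) + α • (S₂⁻¹ *ᵥ μ₂) := by
    rw [ridge_eq_ridgeMatrix_inv_mulVec, mulVec_mulVec,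
      mul_nonsing_inv _ (isUnit_iff_ne_zero.2 hK), one_mulVec]
  rw [ridgeMatrix, add_mulVec, smul_mulVec, smul_mulVec, ← sub_eq_zero] at h
  rw [← h, mulVec_sub, mulVec_sub, smul_sub, smul_sub]
  abel

theorem inv_mulVec_ridge_sub_eq (hK : (ridgeMatrix S₁ S₂ α).det ≠ 0) (hα : α ≠ 0) :
    S₂⁻¹ *ᵥ (ridge D μ₁ μ₂ S₁ S₂ α - μ₂) =
      -((1 - α) / α) • S₁⁻¹ *ᵥ (ridge D μ₁ μ₂ S₁ S₂ α - μ₁) := by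
  rw [← inv_smul_smul₀ hα (S₂⁻¹ *ᵥ _), eq_neg_of_add_eq_zero_right (ridge_stationary μ₁ μ₂ hK),
    smul_neg, smul_smul, neg_smul, inv_mul_eq_div]

theorem hasDerivAt_ridge (hK : (ridgeMatrix S₁ S₂ α).det ≠ 0) (hα : α ≠ 0) :
    HasDerivAt (ridge D μ₁ μ₂ S₁ S₂)
      (α⁻¹ • (ridgeMatrix S₁ S₂ α)⁻¹ *ᵥ (S₁⁻¹ *ᵥ (ridge D μ₁ μ₂ S₁ S₂ α - μ₁))) α := by
  have hb : HasDerivAt (fun s => (1 - s) • (S₁⁻¹ *ᵥ μ₁) + s • (S₂⁻¹ *ᵥ μ₂))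
      (S₂⁻¹ *ᵥ μ₂ - S₁⁻¹ *ᵥ μ₁) α := by
    refine ((((hasDerivAt_id' α).const_sub 1).smul_const (S₁⁻¹ *ᵥ μ₁)).add
      ((hasDerivAt_id' α).smul_const (S₂⁻¹ *ᵥ μ₂))).congr_deriv ?_
    rw [neg_one_smul, one_smul, neg_add_eq_sub]
  refine (HasDerivAt.inv_mulVec hasDerivAt_ridgeMatrix_apply hb hK).congr_deriv ?_
  rw [← ridge_eq_ridgeMatrix_inv_mulVec, ← mulVec_smul]
  congr 1
  calc _ = S₁⁻¹ *ᵥ (ridge D μ₁ μ₂ S₁ S₂ α - μ₁) - S₂⁻¹ *ᵥ (ridge D μ₁ μ₂ S₁ S₂ α - μ₂) := by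
        rw [sub_mulVec, mulVec_sub, mulVec_sub]
        abel
    _ = _ := by
        rw [inv_mulVec_ridge_sub_eq μ₁ μ₂ hK hα]
        match_scalars
        field_simp
        ring

theorem inv_mulVec_ridge_sub_ne_zero (hS₁ : S₁.PosDef) (hS₂ : S₂.PosDef)
    (hα : α ∈ Set.Ioo (0 : ℝ) 1) (hμ : μ₁ ≠ μ₂) :
    S₁⁻¹ *ᵥ (ridge D μ₁ μ₂ S₁ S₂ α - μ₁) ≠ 0 := by
  intro h₁
  have h₂ : S₂⁻¹ *ᵥ (ridge D μ₁ μ₂ S₁ S₂ α - μ₂) = 0 := by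
    simpa [h₁, hα.1.ne'] using
      ridge_stationary μ₁ μ₂ (ridgeMatrix_posDef hS₁ hS₂ hα).det_pos.ne'
  rw [← mulVec_zero S₁⁻¹] at h₁
  rw [← mulVec_zero S₂⁻¹] at h₂
  have e₁ := sub_eq_zero.1 (mulVec_injective_of_det_ne_zero hS₁.inv.det_pos.ne' h₁)
  have e₂ := sub_eq_zero.1 (mulVec_injective_of_det_ne_zero hS₂.inv.det_pos.ne' h₂)
  exact hμ (e₁.symm.trans e₂)

end Ridge

theorem inv_div_sub_eq_of_deriv_eq {a s p₁ p₂ d₁ d₂ : ℝ} (ha₀ : a ≠ 0) (ha₁ : 1 - a ≠ 0)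
    (hs : s ≠ 0) (hp₂ : p₂ ≠ 0) (hd₁ : d₁ = -s * p₁) (hd₂ : d₂ = (1 - a) / a * s * p₂) :
    (d₂ / (d₂ - d₁))⁻¹ = 1 + a * p₁ / ((1 - a) * p₂) := by
  rw [hd₁, hd₂, inv_div]
  field_simp
  ring

/-- `1/Π(α) = 1 + α φ₁(α) / ((1-α) φ₂(α))` for `α ∈ (0,1)`. -/
theorem pi_function_formula
    (D : ℕ) (μ₁ μ₂ : Fin D → ℝ) (S₁ S₂ : Matrix (Fin D) (Fin D) ℝ)
    (hS₁ : S₁.PosDef) (hS₂ : S₂.PosDef) (hμ : μ₁ ≠ μ₂)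
    (α : ℝ) (hα : α ∈ Set.Ioo (0 : ℝ) 1) :
    (deriv (φα D μ₁ μ₂ S₁ S₂ μ₂ S₂) α /
        (deriv (φα D μ₁ μ₂ S₁ S₂ μ₂ S₂) α - deriv (φα D μ₁ μ₂ S₁ S₂ μ₁ S₁) α))⁻¹ =
      1 + α * φα D μ₁ μ₂ S₁ S₂ μ₁ S₁ α / ((1 - α) * φα D μ₁ μ₂ S₁ S₂ μ₂ S₂ α) := by
  have hK := ridgeMatrix_posDef hS₁ hS₂ hα
  have hx' := hasDerivAt_ridge μ₁ μ₂ hK.det_pos.ne' hα.1.ne'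
  have hv₁ := inv_mulVec_ridge_sub_ne_zero μ₁ μ₂ hS₁ hS₂ hα hμ
  have hs : 0 < (α⁻¹ • (ridgeMatrix S₁ S₂ α)⁻¹ *ᵥ (S₁⁻¹ *ᵥ (ridge D μ₁ μ₂ S₁ S₂ α - μ₁))) ⬝ᵥ
      (S₁⁻¹ *ᵥ (ridge D μ₁ μ₂ S₁ S₂ α - μ₁)) := by
    rw [smul_dotProduct, dotProduct_comm]
    exact smul_pos (inv_pos.2 hα.1) (by simpa using hK.inv.dotProduct_mulVec_pos hv₁)
  refine inv_div_sub_eq_of_deriv_eq hα.1.ne' (sub_pos.2 hα.2).ne' hs.ne'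
    (gauss_pos_s10 μ₂ hS₂.det_pos _).ne'
    (hx'.gauss_comp μ₁ (isHermitian_iff_isSymm.1 hS₁.isHermitian)).deriv ?_
  refine (hx'.gauss_comp μ₂ (isHermitian_iff_isSymm.1 hS₂.isHermitian)).deriv.trans ?_
  rw [φα, inv_mulVec_ridge_sub_eq μ₁ μ₂ hK.det_pos.ne' hα.1.ne', dotProduct_smul, smul_eq_mul]
  ring
end

section
/- (Proportional variance case) If Σ_2 = σ²Σ_1 with σ > 0, then the zeroes of κ(α) in [0,1] coincide with the zeroes in [0,1] of the cubic q_1(α) = (σ²(1-α) + α)³ - α(1-α)μ²σ², where μ² = (μ_2 - μ_1)'Σ_1^{-1}(μ_2 - μ_1). -/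
/-!
When `Σ₂ = σ²Σ₁`, the mixture `S_α` is the scalar multiple `((1-α) + α/σ²) • Σ₁⁻¹`, so all the
matrices in `p(α)` cancel and `p(α) = σ²μ² / (σ²(1-α)+α)³`, which is positive on `[0,1]`.
Hence `κ(α) = 0` iff `α(1-α)p(α) = 1`, and clearing the positive denominator gives `q₁(α) = 0`.
-/

open Matrix

/-- The function \`p(α)\` from the curvature formula. -/
noncomputable def pfun (D : ℕ) (μ₁ μ₂ : Fin D → ℝ)
    (S₁ S₂ : Matrix (Fin D) (Fin D) ℝ) (α : ℝ) : ℝ :=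
  (μ₂ - μ₁) ⬝ᵥ ((S₁⁻¹ * ((1 - α) • S₁⁻¹ + α • S₂⁻¹)⁻¹ * S₂⁻¹ *
      ((1 - α) • S₁⁻¹ + α • S₂⁻¹)⁻¹ * S₂⁻¹ *
      ((1 - α) • S₁⁻¹ + α • S₂⁻¹)⁻¹ * S₁⁻¹) *ᵥ (μ₂ - μ₁))

theorem Matrix.inv_smul_of_isUnit_det {n K : Type*} [Fintype n] [DecidableEq n] [Field K]
    {A : Matrix n n K} (hA : IsUnit A.det) (k : K) : (k • A)⁻¹ = k⁻¹ • A⁻¹ := by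
  rcases eq_or_ne k 0 with rfl | hk
  · simp
  · exact inv_smul' A (Units.mk0 k hk) hA

/-- Valid for all `s` and `α`: in the degenerate cases both sides vanish since `0⁻¹ = 0`. -/
theorem pfun_smul_self {D : ℕ} (μ₁ μ₂ : Fin D → ℝ) {S : Matrix (Fin D) (Fin D) ℝ}
    (hS : IsUnit S.det) (s α : ℝ) :
    pfun D μ₁ μ₂ S (s • S) α =
      s * ((μ₂ - μ₁) ⬝ᵥ (S⁻¹ *ᵥ (μ₂ - μ₁))) / (s * (1 - α) + α) ^ 3 := by
  have hSinv : IsUnit S⁻¹.det := isUnit_nonsing_inv_det_iff.mpr hS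
  have hmix : (1 - α) • S⁻¹ + α • (s • S)⁻¹ = ((1 - α) + α * s⁻¹) • S⁻¹ := by
    rw [inv_smul_of_isUnit_det hS, smul_smul, ← add_smul]
  rw [pfun, hmix, inv_smul_of_isUnit_det hSinv, nonsing_inv_nonsing_inv S hS,
    inv_smul_of_isUnit_det hS]
  simp only [Matrix.smul_mul, Matrix.mul_smul, smul_smul, mul_nonsing_inv_cancel_right _ _ hS,
    smul_mulVec, dotProduct_smul, smul_eq_mul]
  rcases eq_or_ne s 0 with rfl | hs
  · simp
  · rw [show (1 - α) + α * s⁻¹ = (s * (1 - α) + α) / s by field_simp]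
    field_simp

theorem mul_one_sub_add_pos {s α : ℝ} (hs : 0 < s) (hα : α ∈ Set.Icc (0 : ℝ) 1) :
    0 < s * (1 - α) + α := by
  obtain ⟨h0, h1⟩ := hα
  rcases h0.lt_or_eq with h | rfl
  · nlinarith
  · simpa using hs

/-- Proportional-variance case `Σ₂ = σ² Σ₁`: the zeroes of
`κ(α) = p(α)²(1 - α(1-α)p(α))` in `[0,1]` coincide with those of the cubic
`q₁(α) = (σ²(1-α)+α)³ - α(1-α) μ² σ²`. -/
theorem curvature_zeroes_proportional_variance
    (D : ℕ) (μ₁ μ₂ : Fin D → ℝ) (S₁ S₂ : Matrix (Fin D) (Fin D) ℝ)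
    (hS₁ : S₁.PosDef) (σ : ℝ) (hσ : 0 < σ) (hS₂ : S₂ = (σ ^ 2) • S₁)
    (hμ : μ₁ ≠ μ₂) :
    {α ∈ Set.Icc (0 : ℝ) 1 |
        pfun D μ₁ μ₂ S₁ S₂ α ^ 2 * (1 - α * (1 - α) * pfun D μ₁ μ₂ S₁ S₂ α) = 0} =
      {α ∈ Set.Icc (0 : ℝ) 1 |
        (σ ^ 2 * (1 - α) + α) ^ 3 -
          α * (1 - α) * ((μ₂ - μ₁) ⬝ᵥ (S₁⁻¹ *ᵥ (μ₂ - μ₁))) * σ ^ 2 = 0} := by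
  have hm : 0 < (μ₂ - μ₁) ⬝ᵥ (S₁⁻¹ *ᵥ (μ₂ - μ₁)) := by
    simpa using hS₁.inv.dotProduct_mulVec_pos (sub_ne_zero.mpr hμ.symm)
  ext α
  simp only [Set.mem_ofPred_eq, and_congr_right_iff]
  intro hα
  have hd := mul_one_sub_add_pos (pow_pos hσ 2) hα
  rw [hS₂, pfun_smul_self μ₁ μ₂ ((isUnit_iff_isUnit_det S₁).mp hS₁.isUnit),
    mul_eq_zero, or_iff_right (by positivity), sub_eq_zero, sub_eq_zero, eq_comm,
    mul_div_assoc', div_eq_one_iff_eq (by positivity)]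
  constructor <;> intro h <;> linarith
end
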